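/- Let H be a real inner product space, let f : H → ℝ be differentiable with gradient ∇f, and suppose ∇f is Lipschitz with constant L ≥ 0, i.e. ‖∇f(x) − ∇f(y)‖ ≤ L‖x − y‖ for all x, y ∈ H. Let S ⊆ H be convex, w ∈ S, g ∈ H, γ > 0, and let p ∈ S satisfy ⟨(w − γ·g) − p, y − p⟩ ≤ 0 for every y ∈ S. Set D = (w − p)/γ and δ = g − ∇f(w). Then f(p) ≤ f(w) − γ·(1 − L·γ/2)·‖D‖² + γ·⟨δ, D⟩. -/

import Mathlib

open RealInnerProductSpace

lemma descent_aux {H : Type*} [NormedAddCommGroup H] [InnerProductSpace ℝ H]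
    [CompleteSpace H]
    (f : H → ℝ) (f' : H → H) (hf : ∀ x, HasGradientAt f (f' x) x)
    (L : ℝ) (hL : 0 ≤ L) (hlip : ∀ x y, ‖f' x - f' y‖ ≤ L * ‖x - y‖)
    (w p : H) : f p ≤ f w + ⟪f' w, p - w⟫ + L / 2 * ‖p - w‖ ^ 2 := by
  set v := p - w with hv
  set h : ℝ → ℝ := fun t => f (w + t • v) - t * ⟪f' w, v⟫ - L * t ^ 2 / 2 * ‖v‖ ^ 2 with hh
  have hder : ∀ t : ℝ, HasDerivAt h
      (⟪f' (w + t • v), v⟫ - ⟪f' w, v⟫ - L * t * ‖v‖ ^ 2) t := by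
    intro t
    have h1 : HasDerivAt (fun t : ℝ => w + t • v) v t := by
      simpa using ((hasDerivAt_id t).smul_const v).const_add w
    have h2 : HasDerivAt (fun t : ℝ => f (w + t • v)) ⟪f' (w + t • v), v⟫ t := by
      have := ((hf (w + t • v)).hasFDerivAt.comp_hasDerivAt t h1)
      exact this
    have h3 : HasDerivAt (fun t : ℝ => t * ⟪f' w, v⟫) ⟪f' w, v⟫ t := by
      simpa using (hasDerivAt_id t).mul_const ⟪f' w, v⟫
    have h4 : HasDerivAt (fun t : ℝ => L * t ^ 2 / 2 * ‖v‖ ^ 2) (L * t * ‖v‖ ^ 2) t := by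
      have : HasDerivAt (fun t : ℝ => t ^ 2) (2 * t) t := by
        simpa using hasDerivAt_pow 2 t
      have := ((this.const_mul L).div_const 2).mul_const (‖v‖ ^ 2)
      exact this.congr_deriv (by ring)
    exact (h2.sub h3).sub h4
  have hmono : h 1 ≤ h 0 := by
    have : AntitoneOn h (Set.Icc 0 1) := by
      apply antitoneOn_of_deriv_nonpos (convex_Icc (0:ℝ) 1)
      · exact fun t _ => ((hder t).differentiableAt.continuousAt).continuousWithinAt
      · intro t _; exact (hder t).differentiableAt.differentiableWithinAt
      · intro t ht
        rw [interior_Icc] at ht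
        rw [(hder t).deriv]
        have hcs : ⟪f' (w + t • v) - f' w, v⟫ ≤ ‖f' (w + t • v) - f' w‖ * ‖v‖ :=
          real_inner_le_norm _ _
        have hl : ‖f' (w + t • v) - f' w‖ ≤ L * (t * ‖v‖) := by
          have := hlip (w + t • v) w
          simpa [norm_smul, abs_of_nonneg ht.1.le, mul_assoc] using this
        have hv0 : (0:ℝ) ≤ ‖v‖ := norm_nonneg _
        nlinarith [inner_sub_left (𝕜 := ℝ) (f' (w + t • v)) (f' w) v, hcs, hl,
          mul_le_mul_of_nonneg_right hl hv0]
    exact this (by norm_num) (by norm_num) (by norm_num)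
  simp only [hh] at hmono
  have hwv : w + v = p := by simp [hv]
  simp only [one_smul, zero_smul, add_zero, hwv] at hmono
  nlinarith [hmono]

/-- Per-iteration descent inequality for a projected (stochastic) gradient step:
if `f` has an `L`-Lipschitz gradient `f'`, `p` is the metric projection of
`w - γ • g` onto the convex set `S`, `D = (w - p)/γ` and `δ = g - ∇f(w)`, then
`f p ≤ f w - γ (1 - Lγ/2) ‖D‖² + γ ⟪δ, D⟫`. -/
theorem stmt_4 {H : Type*} [NormedAddCommGroup H] [InnerProductSpace ℝ H]
    [CompleteSpace H]
    (f : H → ℝ) (f' : H → H) (hf : ∀ x, HasGradientAt f (f' x) x)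
    (L : ℝ) (hL : 0 ≤ L) (hlip : ∀ x y, ‖f' x - f' y‖ ≤ L * ‖x - y‖)
    (S : Set H) (hS : Convex ℝ S) (w : H) (hw : w ∈ S) (g : H)
    (γ : ℝ) (hγ : 0 < γ) (p : H) (hp : p ∈ S)
    (hproj : ∀ y ∈ S, ⟪(w - γ • g) - p, y - p⟫ ≤ 0) :
    f p ≤ f w - γ * (1 - L * γ / 2) * ‖γ⁻¹ • (w - p)‖ ^ 2
      + γ * ⟪g - f' w, γ⁻¹ • (w - p)⟫ := by
  have hdes := descent_aux f f' hf L hL hlip w p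
  have hpr := hproj w hw
  have hexp : ‖w - p‖ ^ 2 - γ * ⟪g, w - p⟫ ≤ 0 := by
    have : ⟪(w - p) - γ • g, w - p⟫ ≤ 0 := by
      convert hpr using 2; abel
    rw [inner_sub_left, real_inner_smul_left, real_inner_self_eq_norm_sq] at this
    linarith
  have h1 : ⟪f' w, p - w⟫ = -(⟪g, w - p⟫ - ⟪g - f' w, w - p⟫) := by
    rw [inner_sub_left]
    rw [show p - w = -(w - p) by abel, inner_neg_right]
    ring
  have h2 : ‖γ⁻¹ • (w - p)‖ ^ 2 = γ⁻¹ ^ 2 * ‖w - p‖ ^ 2 := by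
    rw [norm_smul, Real.norm_eq_abs, abs_of_nonneg (inv_nonneg.2 hγ.le)]; ring
  have h3 : (⟪g - f' w, γ⁻¹ • (w - p)⟫ : ℝ) = γ⁻¹ * ⟪g - f' w, w - p⟫ :=
    real_inner_smul_right _ _ _
  have h4 : ‖p - w‖ = ‖w - p‖ := by rw [← norm_neg]; congr 1; abel
  rw [h2, h3]
  rw [h1, h4] at hdes
  have hexp2 : γ⁻¹ * ‖w - p‖ ^ 2 ≤ ⟪g, w - p⟫ := by
    rw [inv_mul_le_iff₀ hγ]; linarith
  have e1 : γ * (1 - L * γ / 2) * (γ⁻¹ ^ 2 * ‖w - p‖ ^ 2)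
      = γ⁻¹ * ‖w - p‖ ^ 2 - L / 2 * ‖w - p‖ ^ 2 := by
    field_simp
  have e2 : γ * (γ⁻¹ * ⟪g - f' w, w - p⟫) = ⟪g - f' w, w - p⟫ := by
    field_simp
  rw [e1, e2]
  linarith
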